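/- arXiv:2111.14917 — 5 statements merged into one kernel-verified Lean document; each statement's English description precedes it below -/
import Mathlib

section
/- If {X_i : i ∈ T} and {Y_j : j ∈ U} are each negatively associated families, and the joint vector (X_i)_{i∈T} is independent of the joint vector (Y_j)_{j∈U}, then the combined family {X_i} ∪ {Y_j} is negatively associated. -/
open Finset

/-- Expectation on a finite probability space with weight function `p`. -/
def expect {Ω : Type*} [Fintype Ω] (p : Ω → ℝ) (f : Ω → ℝ) : ℝ :=
  ∑ ω, p ω * f ω

/-- `f` depends only on the coordinates in `I`. -/
def DependsOnCoords {ι : Type*} (f : (ι → ℝ) → ℝ) (I : Finset ι) : Prop :=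
  ∀ x y : ι → ℝ, (∀ i ∈ I, x i = y i) → f x = f y

/-- `f` is monotone non-decreasing in the coordinatewise order. -/
def MonoFn {ι : Type*} (f : (ι → ℝ) → ℝ) : Prop :=
  ∀ x y : ι → ℝ, (∀ i, x i ≤ y i) → f x ≤ f y

/-- `f` is bounded. -/
def BddFn {ι : Type*} (f : (ι → ℝ) → ℝ) : Prop :=
  ∃ C, ∀ x, |f x| ≤ C

/-- The family `{X_i : i ∈ T}` is negatively associated under `p`:
for all disjoint `I, J ⊆ T` and all pairs of bounded monotone non-decreasing
functions `f` (depending only on `I`) and `g` (depending only on `J`),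
`E[f·g] ≤ E[f]·E[g]`. -/
def NegAssoc {Ω ι : Type*} [Fintype Ω] (p : Ω → ℝ) (T : Finset ι)
    (X : ι → Ω → ℝ) : Prop :=
  ∀ I J : Finset ι, I ⊆ T → J ⊆ T → Disjoint I J →
    ∀ f g : (ι → ℝ) → ℝ, DependsOnCoords f I → DependsOnCoords g J →
      MonoFn f → MonoFn g → BddFn f → BddFn g →
        expect p (fun ω => f (fun i => X i ω) * g (fun i => X i ω)) ≤
          expect p (fun ω => f (fun i => X i ω)) *
            expect p (fun ω => g (fun i => X i ω))


/-!
Condition on the value `v` of the vector `Y`: by independence, `E[H(X, Y)]` is the average over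
`ω'` of `E[H(X, Y ω')]`, the expectation with `Y` frozen. For frozen `v`, negative association of
`X` gives `E[f(X, v) g(X, v)] ≤ Φ v * Ψ v` with `Φ v = E[f(X, v)]`, `Ψ v = E[g(X, v)]`. These
averaged functions are again bounded, monotone and depend only on the `U`-coordinates of `I`
resp. `J`, so negative association of `Y` gives `E[Φ(Y) Ψ(Y)] ≤ E[Φ(Y)] E[Ψ(Y)]`, and decoupling
once more identifies `E[Φ(Y)]` with `E[f(X, Y)]`.
-/

section Expect

variable {Ω : Type*} [Fintype Ω] (p : Ω → ℝ)

lemma expect_const_mul (c : ℝ) (f : Ω → ℝ) :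
    expect p (fun ω => c * f ω) = c * expect p f := by
  simp only [_root_.expect, Finset.mul_sum]
  exact sum_congr rfl fun _ _ => by ring

variable {p}

lemma expect_mono (hp : ∀ ω, 0 ≤ p ω) {f g : Ω → ℝ} (h : ∀ ω, f ω ≤ g ω) :
    expect p f ≤ expect p g :=
  sum_le_sum fun ω _ => mul_le_mul_of_nonneg_left (h ω) (hp ω)

lemma abs_expect_le (hp : ∀ ω, 0 ≤ p ω) {f : Ω → ℝ} {C : ℝ} (h : ∀ ω, |f ω| ≤ C) :
    |expect p f| ≤ (∑ ω, p ω) * C :=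
  calc |∑ ω, p ω * f ω| ≤ ∑ ω, |p ω * f ω| := abs_sum_le_sum_abs _ _
    _ ≤ ∑ ω, p ω * C := sum_le_sum fun ω _ => by
        rw [abs_mul, abs_of_nonneg (hp ω)]
        exact mul_le_mul_of_nonneg_left (h ω) (hp ω)
    _ = (∑ ω, p ω) * C := (sum_mul ..).symm

lemma expect_eq_sum_image {β : Type*} [DecidableEq β] (Y : Ω → β) (K : Ω → β → ℝ) :
    expect p (fun ω => K ω (Y ω)) =
      ∑ v ∈ univ.image Y, expect p (fun ω => K ω v * if Y ω = v then 1 else 0) := by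
  have hK : ∀ ω, K ω (Y ω) = ∑ v ∈ univ.image Y, K ω v * if Y ω = v then 1 else 0 := fun ω => by
    simp only [mul_ite, mul_one, mul_zero]
    rw [sum_ite_eq]
    simp
  simp only [_root_.expect, hK, mul_sum]
  exact sum_comm

lemma expect_eq_expect_expect_of_indep {α β : Type*} {X : Ω → α} {Y : Ω → β}
    (hindep : ∀ (F : α → ℝ) (G : β → ℝ),
      expect p (fun ω => F (X ω) * G (Y ω)) =
        expect p (fun ω => F (X ω)) * expect p (fun ω => G (Y ω)))
    (H : α → β → ℝ) :
    expect p (fun ω => H (X ω) (Y ω)) =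
      expect p (fun ω' => expect p (fun ω => H (X ω) (Y ω'))) := by
  classical
  rw [expect_eq_sum_image Y (fun ω v => H (X ω) v),
    expect_eq_sum_image Y (fun _ v => expect p (fun ω => H (X ω) v))]
  refine sum_congr rfl fun v _ => ?_
  rw [hindep (fun x => H x v) (fun y => if y = v then 1 else 0), expect_const_mul]

end Expect

section SumElim

variable {ι κ : Type*} {f : (ι ⊕ κ → ℝ) → ℝ}

lemma DependsOnCoords.comp_sumElim_left {I : Finset (ι ⊕ κ)} (hf : DependsOnCoords f I)
    (v : κ → ℝ) : DependsOnCoords (fun u => f (Sum.elim u v)) I.toLeft := by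
  intro x y h
  refine hf _ _ fun s hs => ?_
  cases s with
  | inl i => exact h i (mem_toLeft.2 hs)
  | inr j => rfl

lemma DependsOnCoords.comp_sumElim_right {I : Finset (ι ⊕ κ)} (hf : DependsOnCoords f I)
    (u : ι → ℝ) : DependsOnCoords (fun v => f (Sum.elim u v)) I.toRight := by
  intro x y h
  refine hf _ _ fun s hs => ?_
  cases s with
  | inl i => rfl
  | inr j => exact h j (mem_toRight.2 hs)

lemma MonoFn.comp_sumElim_left (hf : MonoFn f) (v : κ → ℝ) :
    MonoFn (fun u => f (Sum.elim u v)) :=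
  fun x y h => hf _ _ fun s => by cases s <;> simp [h]

lemma MonoFn.comp_sumElim_right (hf : MonoFn f) (u : ι → ℝ) :
    MonoFn (fun v => f (Sum.elim u v)) :=
  fun x y h => hf _ _ fun s => by cases s <;> simp [h]

end SumElim

lemma BddFn.comp {ι κ : Type*} {f : (ι → ℝ) → ℝ} (hf : BddFn f) (φ : (κ → ℝ) → ι → ℝ) :
    BddFn (f ∘ φ) :=
  let ⟨C, hC⟩ := hf
  ⟨C, fun x => hC (φ x)⟩

section ExpectOfFamily

variable {Ω ι : Type*} [Fintype Ω] {p : Ω → ℝ} {F : Ω → (ι → ℝ) → ℝ}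

lemma DependsOnCoords.expect {I : Finset ι} (h : ∀ ω, DependsOnCoords (F ω) I) :
    DependsOnCoords (fun x => expect p (fun ω => F ω x)) I :=
  fun x y hxy => sum_congr rfl fun ω _ => congrArg (p ω * ·) (h ω x y hxy)

lemma MonoFn.expect (hp : ∀ ω, 0 ≤ p ω) (h : ∀ ω, MonoFn (F ω)) :
    MonoFn (fun x => expect p (fun ω => F ω x)) :=
  fun x y hxy => expect_mono hp fun ω => h ω x y hxy

lemma BddFn.expect (hp : ∀ ω, 0 ≤ p ω) {C : ℝ} (h : ∀ ω x, |F ω x| ≤ C) :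
    BddFn (fun x => expect p (fun ω => F ω x)) :=
  ⟨(∑ ω, p ω) * C, fun x => abs_expect_le hp fun ω => h ω x⟩

end ExpectOfFamily

lemma Finset.disjoint_toLeft {α β : Type*} {u v : Finset (α ⊕ β)} (h : Disjoint u v) :
    Disjoint u.toLeft v.toLeft :=
  disjoint_left.2 fun _ ha hb => disjoint_left.1 h (mem_toLeft.1 ha) (mem_toLeft.1 hb)

lemma Finset.disjoint_toRight {α β : Type*} {u v : Finset (α ⊕ β)} (h : Disjoint u v) :
    Disjoint u.toRight v.toRight :=
  disjoint_left.2 fun _ ha hb => disjoint_left.1 h (mem_toRight.1 ha) (mem_toRight.1 hb)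

lemma NegAssoc.expect_mul_sumElim_le {Ω ι κ : Type*} [Fintype Ω] {p : Ω → ℝ} {T : Finset ι}
    {X : ι → Ω → ℝ} (hX : NegAssoc p T X) {I J : Finset (ι ⊕ κ)} (hI : I.toLeft ⊆ T)
    (hJ : J.toLeft ⊆ T) (hIJ : Disjoint I J) {f g : (ι ⊕ κ → ℝ) → ℝ}
    (hfI : DependsOnCoords f I) (hgJ : DependsOnCoords g J) (hf : MonoFn f) (hg : MonoFn g)
    (hfb : BddFn f) (hgb : BddFn g) (v : κ → ℝ) :
    expect p (fun ω => f (Sum.elim (fun i => X i ω) v) * g (Sum.elim (fun i => X i ω) v)) ≤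
      expect p (fun ω => f (Sum.elim (fun i => X i ω) v)) *
        expect p (fun ω => g (Sum.elim (fun i => X i ω) v)) :=
  hX _ _ hI hJ (disjoint_toLeft hIJ) _ _ (hfI.comp_sumElim_left v) (hgJ.comp_sumElim_left v)
    (hf.comp_sumElim_left v) (hg.comp_sumElim_left v) (hfb.comp _) (hgb.comp _)

theorem negAssoc_union_of_indep_general {Ω ι κ : Type*} [Fintype Ω] (p : Ω → ℝ)
    (hp : ∀ ω, 0 ≤ p ω)
    (X : ι → Ω → ℝ) (Y : κ → Ω → ℝ) (T : Finset ι) (U : Finset κ)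
    (hX : NegAssoc p T X) (hY : NegAssoc p U Y)
    (hindep : ∀ (F : (ι → ℝ) → ℝ) (G : (κ → ℝ) → ℝ),
      expect p (fun ω => F (fun i => X i ω) * G (fun j => Y j ω)) =
        expect p (fun ω => F (fun i => X i ω)) *
          expect p (fun ω => G (fun j => Y j ω))) :
    NegAssoc p (T.disjSum U) (Sum.elim X Y) := by
  intro I J hIT hJT hIJ f g hfI hgJ hfm hgm ⟨C, hfC⟩ ⟨D, hgD⟩
  obtain ⟨hIT, hIU⟩ := subset_disjSum.1 hIT
  obtain ⟨hJT, hJU⟩ := subset_disjSum.1 hJT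
  have hXY : ∀ ω, (fun s => Sum.elim X Y s ω) = Sum.elim (fun i => X i ω) (fun j => Y j ω) :=
    fun ω => funext fun s => by cases s <;> rfl
  have decouple := expect_eq_expect_expect_of_indep hindep
  simp only [hXY]
  calc _ = _ := decouple fun u v => f (Sum.elim u v) * g (Sum.elim u v)
    _ ≤ _ := expect_mono hp fun _ => hX.expect_mul_sumElim_le hIT hJT hIJ hfI hgJ hfm hgm
        ⟨C, hfC⟩ ⟨D, hgD⟩ _
    _ ≤ _ := hY _ _ hIU hJU (disjoint_toRight hIJ) _ _
        (.expect fun _ => hfI.comp_sumElim_right _) (.expect fun _ => hgJ.comp_sumElim_right _)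
        (.expect hp fun _ => hfm.comp_sumElim_right _) (.expect hp fun _ => hgm.comp_sumElim_right _)
        (.expect hp fun _ _ => hfC _) (.expect hp fun _ _ => hgD _)
    _ = _ := by rw [decouple fun u v => f (Sum.elim u v), decouple fun u v => g (Sum.elim u v)]

/-- If two negatively associated families are independent of each other
(as joint vectors), then their union is negatively associated. -/
theorem negAssoc_union_of_indep {Ω ι κ : Type*} [Fintype Ω] (p : Ω → ℝ)
    (hp : ∀ ω, 0 ≤ p ω) (hsum : ∑ ω, p ω = 1)
    (X : ι → Ω → ℝ) (Y : κ → Ω → ℝ) (T : Finset ι) (U : Finset κ)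
    (hX : NegAssoc p T X) (hY : NegAssoc p U Y)
    (hindep : ∀ (F : (ι → ℝ) → ℝ) (G : (κ → ℝ) → ℝ),
      expect p (fun ω => F (fun i => X i ω) * G (fun j => Y j ω)) =
        expect p (fun ω => F (fun i => X i ω)) *
          expect p (fun ω => G (fun j => Y j ω))) :
    NegAssoc p (T.disjSum U) (Sum.elim X Y) :=
  negAssoc_union_of_indep_general p hp X Y T U hX hY hindep
end

section
/- In any M-BI frame, the unit sets are antitone in the pre-order on M: if m₁ ≤ m₂ in M, then E_{m₂} ⊆ E_{m₁}. -/
/-- In any M-BI frame, the unit sets are antitone in the pre-order on `M`: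
if `m₁ ≤ m₂` then `E m₂ ⊆ E m₁`. -/
theorem mbi_unit_antitone {X M : Type*} [Preorder M]
    (sle : X → X → Prop)
    (hrefl : ∀ x, sle x x)
    (htrans : ∀ x y z, sle x y → sle y z → sle x z)
    (op : M → X → X → Set X) (E : M → Set X)
    (downClosed : ∀ m (x x' y y' z : X), z ∈ op m x y → sle x' x → sle y' y →
      ∃ z', sle z' z ∧ z' ∈ op m x' y')
    (comm : ∀ m (x y z : X), z ∈ op m x y → z ∈ op m y x)
    (assoc : ∀ m (x y z t w : X), w ∈ op m t z → t ∈ op m x y →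
      ∃ s, s ∈ op m y z ∧ w ∈ op m x s)
    (unitExist : ∀ m (x : X), ∃ e ∈ E m, x ∈ op m e x)
    (unitCoh : ∀ m (e x y : X), e ∈ E m → x ∈ op m y e → sle y x)
    (unitClos : ∀ m (e e' : X), e ∈ E m → sle e e' → e' ∈ E m)
    (opIncl : ∀ m₁ m₂ : M, m₁ ≤ m₂ → ∀ x y : X, op m₁ x y ⊆ op m₂ x y) :
    ∀ m₁ m₂ : M, m₁ ≤ m₂ → E m₂ ⊆ E m₁ := by
  intro m₁ m₂ hm e he
  obtain ⟨e₁, he₁, hop⟩ := unitExist m₁ e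
  exact unitClos m₁ e₁ e he₁ (unitCoh m₂ e e e₁ he (opIncl m₁ m₂ hm e₁ e hop))
end

section
/- For distributions with finite support, zero monotone correlation on products implies independence: let μ be a probability distribution on a product of finitely many finite ordered spaces indexed by blocks S_1,...,S_N. If for every family of non-negative functions f_1,...,f_N that are all monotone non-decreasing (each f_i depending only on coordinates in S_i), E_μ[∏ f_i] = ∏ E_μ[f_i], then the blocks S_1,...,S_N are mutually independent under μ. -/
open Finset

/-- For a distribution with finite support on a finite product of finite
linearly ordered spaces, if every family of non-negative monotone
non-decreasing functions (one per block) has zero product correlation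
(the expectation of the product equals the product of expectations), then
the blocks are mutually independent. -/
theorem indep_of_zero_monotone_correlation {N : ℕ} (α : Fin N → Type)
    [∀ i, Fintype (α i)] [∀ i, LinearOrder (α i)]
    (μ : ((i : Fin N) → α i) → ℝ)
    (hnn : ∀ x, 0 ≤ μ x) (hsum : ∑ x, μ x = 1)
    (h : ∀ f : (i : Fin N) → α i → ℝ,
      (∀ i a, 0 ≤ f i a) → (∀ i, Monotone (f i)) →
        ∑ x, μ x * ∏ i, f i (x i) = ∏ i, ∑ x, μ x * f i (x i)) :
    ∀ v : (i : Fin N) → α i,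
      μ v = ∏ i, ∑ x, (if x i = v i then μ x else 0) := by
  intro v
  set G : (i : Fin N) → α i → ℝ := fun i a => if v i ≤ a then 1 else 0 with hG
  set H : (i : Fin N) → α i → ℝ := fun i a => if v i < a then 1 else 0 with hH
  -- pointwise indicator identity
  have hpt : ∀ i (a : α i), G i a - H i a = if a = v i then 1 else 0 := by
    intro i a
    simp only [hG, hH]
    rcases lt_trichotomy a (v i) with hlt | heq | hgt
    · rw [if_neg (not_le.mpr hlt), if_neg (by exact fun c => absurd c (not_lt.mpr hlt.le)),
        if_neg hlt.ne]
      ring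
    · subst heq; simp
    · rw [if_pos hgt.le, if_pos hgt, if_neg hgt.ne']
      ring
  -- product of ite over univ
  have prod_if : ∀ (s : Finset (Fin N)) (f g : Fin N → ℝ),
      ∏ i, (if i ∈ s then f i else g i) = (∏ i ∈ s, f i) * ∏ i ∈ univ \ s, g i := by
    intro s f g
    have : ∀ i, (if i ∈ s then f i else g i) = s.piecewise f g i := fun i => rfl
    rw [Finset.prod_congr rfl fun i _ => this i, Finset.prod_piecewise, Finset.univ_inter]
  -- multilinear expansion
  have expand : ∀ (p q : Fin N → ℝ), ∏ i, (p i - q i) =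
      ∑ s ∈ (univ : Finset (Fin N)).powerset,
        (-1 : ℝ) ^ s.card * ((∏ i ∈ s, q i) * ∏ i ∈ univ \ s, p i) := by
    intro p q
    calc ∏ i, (p i - q i) = ∏ i, ((fun i => -q i) i + p i) := by
          apply Finset.prod_congr rfl; intro i _; ring
      _ = ∑ s ∈ (univ : Finset (Fin N)).powerset,
            (∏ i ∈ s, -q i) * ∏ i ∈ univ \ s, p i := Finset.prod_add _ _ _
      _ = _ := by
          refine Finset.sum_congr rfl fun s _ => ?_
          rw [show (∏ i ∈ s, -q i) = (-1 : ℝ) ^ s.card * ∏ i ∈ s, q i by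
            rw [← Finset.prod_const (-1 : ℝ), ← Finset.prod_mul_distrib]
            exact Finset.prod_congr rfl fun i _ => (neg_one_mul _).symm]
          ring
  have monoG : ∀ i, Monotone (G i) := by
    intro i a b hab
    simp only [hG]
    split_ifs <;> try norm_num
    exact absurd (le_trans ‹v i ≤ a› hab) ‹¬ v i ≤ b›
  have monoH : ∀ i, Monotone (H i) := by
    intro i a b hab
    simp only [hH]
    split_ifs <;> try norm_num
    exact absurd (lt_of_lt_of_le ‹v i < a› hab) ‹¬ v i < b›
  have nnG : ∀ i a, 0 ≤ G i a := by intro i a; simp only [hG]; split <;> norm_num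
  have nnH : ∀ i a, 0 ≤ H i a := by intro i a; simp only [hH]; split <;> norm_num
  have hGH : ∀ (s : Finset (Fin N)),
      ∑ x, μ x * ∏ i, (if i ∈ s then H i (x i) else G i (x i))
        = ∏ i, ∑ x, μ x * (if i ∈ s then H i (x i) else G i (x i)) := by
    intro s
    apply h (fun i a => if i ∈ s then H i a else G i a)
    · intro i a
      by_cases hi : i ∈ s
      · simpa only [if_pos hi] using nnH i a
      · simpa only [if_neg hi] using nnG i a
    · intro i
      by_cases hi : i ∈ s
      · simpa only [if_pos hi] using monoH i
      · simpa only [if_neg hi] using monoG i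
  -- A and B
  set A : Fin N → ℝ := fun i => ∑ x, μ x * G i (x i) with hA
  set B : Fin N → ℝ := fun i => ∑ x, μ x * H i (x i) with hB
  have step1 : μ v = ∑ x, μ x * ∏ i, (G i (x i) - H i (x i)) := by
    have key : ∀ x : (i : Fin N) → α i,
        ∏ i, (G i (x i) - H i (x i)) = if x = v then 1 else 0 := by
      intro x
      calc ∏ i, (G i (x i) - H i (x i)) = ∏ i, (if x i = v i then (1:ℝ) else 0) :=
            Finset.prod_congr rfl fun i _ => hpt i (x i)
        _ = if x = v then 1 else 0 := by
            simp only [Finset.prod_boole]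
            simp [funext_iff]
    calc μ v = ∑ x, (if x = v then μ x else 0) := by simp
      _ = ∑ x, μ x * ∏ i, (G i (x i) - H i (x i)) := by
          refine Finset.sum_congr rfl fun x _ => ?_
          rw [key x, mul_ite, mul_one, mul_zero]
  have lhs_eq : μ v = ∑ s ∈ (univ : Finset (Fin N)).powerset,
      (-1 : ℝ) ^ s.card * ((∏ i ∈ s, B i) * ∏ i ∈ univ \ s, A i) := by
    rw [step1]
    have : ∀ x : (i : Fin N) → α i, μ x * ∏ i, (G i (x i) - H i (x i))
        = ∑ s ∈ (univ : Finset (Fin N)).powerset,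
            (-1 : ℝ) ^ s.card * (μ x * ∏ i, (if i ∈ s then H i (x i) else G i (x i))) := by
      intro x
      rw [expand (fun i => G i (x i)) (fun i => H i (x i)), Finset.mul_sum]
      refine Finset.sum_congr rfl fun s _ => ?_
      rw [prod_if s (fun i => H i (x i)) (fun i => G i (x i))]
      ring
    rw [Finset.sum_congr rfl fun x _ => this x, Finset.sum_comm]
    refine Finset.sum_congr rfl fun s _ => ?_
    rw [← Finset.mul_sum, hGH s]
    congr 1
    rw [← prod_if s B A]
    refine Finset.prod_congr rfl fun i _ => ?_
    by_cases hi : i ∈ s <;> simp [hi, hA, hB]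
  rw [lhs_eq, ← expand A B]
  refine Finset.prod_congr rfl fun i _ => ?_
  calc A i - B i = ∑ x, (μ x * G i (x i) - μ x * H i (x i)) := by
        rw [hA, hB, Finset.sum_sub_distrib]
    _ = ∑ x, (if x i = v i then μ x else 0) := by
        refine Finset.sum_congr rfl fun x _ => ?_
        rw [← mul_sub, hpt i (x i), mul_ite, mul_one, mul_zero]
end

section
/- If random variables X and Y are negatively associated and X takes only values 0 and 1 with A = 1 − X, and the pair (A, Y) is also negatively associated, then X and Y are independent. -/
open Finset

/-- The pair `(U, V)` is negatively associated: for all pairs of monotone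
non-decreasing bounded functions `f, g : ℝ → ℝ`,
`E[f(U)g(V)] ≤ E[f(U)]E[g(V)]`. -/
def PairNA {Ω : Type*} [Fintype Ω] (p : Ω → ℝ) (U V : Ω → ℝ) : Prop :=
  ∀ f g : ℝ → ℝ, Monotone f → Monotone g →
    (∃ C, ∀ t, |f t| ≤ C) → (∃ C, ∀ t, |g t| ≤ C) →
      expect p (fun ω => f (U ω) * g (V ω)) ≤
        expect p (fun ω => f (U ω)) * expect p (fun ω => g (V ω))

/-- If `X` is uniform on `{0,1}`, and both `(X, Y)` and `(1 - X, Y)` are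
negatively associated, then `X` and `Y` are independent. -/
theorem indep_of_pairNA_and_complement {Ω : Type*} [Fintype Ω] (p : Ω → ℝ)
    (hp : ∀ ω, 0 ≤ p ω) (hsum : ∑ ω, p ω = 1)
    (X Y : Ω → ℝ)
    (hX01 : ∀ ω, X ω = 0 ∨ X ω = 1)
    (hXunif : expect p X = 1 / 2)
    (hXY : PairNA p X Y)
    (hAY : PairNA p (fun ω => 1 - X ω) Y) :
    ∀ f g : ℝ → ℝ,
      expect p (fun ω => f (X ω) * g (Y ω)) =
        expect p (fun ω => f (X ω)) * expect p (fun ω => g (Y ω)) := by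
  -- clamp function, equal to identity on {0,1}
  have hf0 : Monotone (fun t : ℝ => max 0 (min t 1)) :=
    monotone_const.max (monotone_id.min monotone_const)
  have hf0b : ∃ C, ∀ t : ℝ, |max 0 (min t 1)| ≤ C := by
    refine ⟨1, fun t => ?_⟩
    rw [abs_of_nonneg (le_max_left _ _)]
    exact max_le zero_le_one (min_le_right _ _)
  have hf0X : ∀ ω, max 0 (min (X ω) 1) = X ω := by
    intro ω; rcases hX01 ω with h | h <;> simp [h]
  have hf0A : ∀ ω, max 0 (min (1 - X ω) 1) = 1 - X ω := by
    intro ω; rcases hX01 ω with h | h <;> norm_num [h]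
  -- Key: equality for monotone bounded g
  have keyA : ∀ g : ℝ → ℝ, Monotone g → (∃ C, ∀ t, |g t| ≤ C) →
      expect p (fun ω => X ω * g (Y ω)) =
        expect p X * expect p (fun ω => g (Y ω)) := by
    intro g hg hgb
    have h1 := hXY _ g hf0 hg hf0b hgb
    have h2 := hAY _ g hf0 hg hf0b hgb
    simp only [_root_.expect, hf0X, hf0A] at h1 h2 ⊢
    have e1 : ∑ ω, p ω * ((1 - X ω) * g (Y ω)) =
        (∑ ω, p ω * g (Y ω)) - ∑ ω, p ω * (X ω * g (Y ω)) := by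
      rw [← Finset.sum_sub_distrib]
      exact Finset.sum_congr rfl fun ω _ => by ring
    have e2 : ∑ ω, p ω * (1 - X ω) = 1 - ∑ ω, p ω * X ω := by
      have : ∀ ω, p ω * (1 - X ω) = p ω - p ω * X ω := fun ω => by ring
      rw [Finset.sum_congr rfl fun ω _ => this ω, Finset.sum_sub_distrib, hsum]
    rw [e1, e2] at h2
    nlinarith [h1, h2]
  -- indicator of a single point
  have keyB : ∀ y : ℝ,
      expect p (fun ω => X ω * (if Y ω = y then (1:ℝ) else 0)) =
        expect p X * expect p (fun ω => if Y ω = y then (1:ℝ) else 0) := by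
    intro y
    have hm1 : Monotone (fun t : ℝ => if y ≤ t then (1:ℝ) else 0) := by
      intro a b hab; dsimp only
      split_ifs with h1 h2
      · exact le_refl _
      · exact absurd (h1.trans hab) h2
      · norm_num
      · exact le_refl _
    have hm2 : Monotone (fun t : ℝ => if y < t then (1:ℝ) else 0) := by
      intro a b hab; dsimp only
      split_ifs with h1 h2
      · exact le_refl _
      · exact absurd (h1.trans_le hab) h2
      · norm_num
      · exact le_refl _
    have hb1 : ∃ C, ∀ t : ℝ, |if y ≤ t then (1:ℝ) else 0| ≤ C :=
      ⟨1, fun t => by split_ifs <;> norm_num⟩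
    have hb2 : ∃ C, ∀ t : ℝ, |if y < t then (1:ℝ) else 0| ≤ C :=
      ⟨1, fun t => by split_ifs <;> norm_num⟩
    have k1 := keyA _ hm1 hb1
    have k2 := keyA _ hm2 hb2
    have hδ : ∀ t : ℝ, (if y ≤ t then (1:ℝ) else 0) - (if y < t then (1:ℝ) else 0) =
        if t = y then 1 else 0 := by
      intro t
      rcases lt_trichotomy t y with h | h | h
      · simp [not_le.mpr h, h.ne, asymm h]
      · simp [h]
      · simp [h, h.le, h.ne']
    simp only [_root_.expect] at k1 k2 ⊢
    have e1 : ∑ ω, p ω * (X ω * (if Y ω = y then (1:ℝ) else 0)) =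
        (∑ ω, p ω * (X ω * (if y ≤ Y ω then (1:ℝ) else 0))) -
        ∑ ω, p ω * (X ω * (if y < Y ω then (1:ℝ) else 0)) := by
      rw [← Finset.sum_sub_distrib]
      refine Finset.sum_congr rfl fun ω _ => ?_
      rw [← hδ (Y ω)]; ring
    have e2 : ∑ ω, p ω * (if Y ω = y then (1:ℝ) else 0) =
        (∑ ω, p ω * (if y ≤ Y ω then (1:ℝ) else 0)) -
        ∑ ω, p ω * (if y < Y ω then (1:ℝ) else 0) := by
      rw [← Finset.sum_sub_distrib]
      refine Finset.sum_congr rfl fun ω _ => ?_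
      rw [← hδ (Y ω)]; ring
    rw [e1, e2, k1, k2]; ring
  -- arbitrary g
  have keyC : ∀ g : ℝ → ℝ,
      expect p (fun ω => X ω * g (Y ω)) =
        expect p X * expect p (fun ω => g (Y ω)) := by
    intro g
    set s := Finset.image Y Finset.univ with hs
    have hdec : ∀ ω, g (Y ω) =
        ∑ y ∈ s, g y * (if Y ω = y then (1:ℝ) else 0) := by
      intro ω
      have hmem : Y ω ∈ s := Finset.mem_image_of_mem Y (Finset.mem_univ ω)
      rw [Finset.sum_eq_single (Y ω)]
      · simp
      · intro b _ hb; simp [Ne.symm hb]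
      · intro h; exact absurd hmem h
    have swapX : expect p (fun ω => X ω * g (Y ω)) =
        ∑ y ∈ s, g y * expect p (fun ω => X ω * (if Y ω = y then (1:ℝ) else 0)) := by
      simp only [_root_.expect]
      calc ∑ ω, p ω * (X ω * g (Y ω))
          = ∑ ω, ∑ y ∈ s, g y * (p ω * (X ω * (if Y ω = y then (1:ℝ) else 0))) := by
            refine Finset.sum_congr rfl fun ω _ => ?_
            rw [hdec ω, Finset.mul_sum, Finset.mul_sum]
            exact Finset.sum_congr rfl fun y _ => by ring
        _ = ∑ y ∈ s, ∑ ω, g y * (p ω * (X ω * (if Y ω = y then (1:ℝ) else 0))) :=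
            Finset.sum_comm
        _ = ∑ y ∈ s, g y * ∑ ω, p ω * (X ω * (if Y ω = y then (1:ℝ) else 0)) := by
            exact Finset.sum_congr rfl fun y _ => (Finset.mul_sum _ _ _).symm
    have swap1 : expect p (fun ω => g (Y ω)) =
        ∑ y ∈ s, g y * expect p (fun ω => if Y ω = y then (1:ℝ) else 0) := by
      simp only [_root_.expect]
      calc ∑ ω, p ω * g (Y ω)
          = ∑ ω, ∑ y ∈ s, g y * (p ω * (if Y ω = y then (1:ℝ) else 0)) := by
            refine Finset.sum_congr rfl fun ω _ => ?_
            rw [hdec ω, Finset.mul_sum]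
            exact Finset.sum_congr rfl fun y _ => by ring
        _ = ∑ y ∈ s, ∑ ω, g y * (p ω * (if Y ω = y then (1:ℝ) else 0)) :=
            Finset.sum_comm
        _ = ∑ y ∈ s, g y * ∑ ω, p ω * (if Y ω = y then (1:ℝ) else 0) := by
            exact Finset.sum_congr rfl fun y _ => (Finset.mul_sum _ _ _).symm
    rw [swapX, swap1, Finset.mul_sum]
    refine Finset.sum_congr rfl fun y _ => ?_
    rw [keyB y]; ring
  -- main statement
  intro f g
  set c : ℝ := f 1 - f 0 with hc
  have hfX : ∀ ω, f (X ω) = f 0 + c * X ω := by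
    intro ω; rcases hX01 ω with h | h <;> rw [h] <;> ring_nf <;> simp [hc]
  have e3 : expect p (fun ω => f (X ω) * g (Y ω)) =
      f 0 * expect p (fun ω => g (Y ω)) + c * expect p (fun ω => X ω * g (Y ω)) := by
    simp only [_root_.expect, Finset.mul_sum]
    rw [← Finset.sum_add_distrib]
    refine Finset.sum_congr rfl fun ω _ => ?_
    rw [hfX ω]; ring
  have e4 : expect p (fun ω => f (X ω)) = f 0 + c * expect p X := by
    simp only [_root_.expect, Finset.mul_sum]
    nth_rewrite 1 [show f 0 = f 0 * ∑ ω, p ω by rw [hsum]; ring]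
    rw [Finset.mul_sum, ← Finset.sum_add_distrib]
    refine Finset.sum_congr rfl fun ω _ => ?_
    rw [hfX ω]; ring
  rw [e3, e4, keyC g]; ring
end

section
/- The entries of a uniformly random permutation vector are negatively associated in pairs: if (X_1,...,X_n) is a uniformly random permutation of the finite set {a_1 < a_2 < ... < a_n} of reals, then for all i ≠ j and all monotone non-decreasing functions f, g : ℝ → ℝ, E[f(X_i)·g(X_j)] ≤ E[f(X_i)]·E[g(X_j)]. -/
/-!
The position `X_i = a (σ i)` of a uniform permutation is uniform on the values, and for `i ≠ j`
the pair `(X_i, X_j)` is uniform on ordered pairs of distinct values: averaging over `σ` is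
invariant under right multiplication by a permutation moving `(i, j)` to any other pair of
distinct points. Summing `F k * G l` over `k ≠ l` gives `(∑ F) (∑ G) - ∑ F G`, so the claimed
inequality becomes Chebyshev's sum inequality `(∑ F) (∑ G) ≤ n ∑ F G` for the similarly ordered
`F = f ∘ a` and `G = g ∘ a`.
-/

open Equiv Finset
open scoped BigOperators

namespace Equiv.Perm

variable {α M : Type*} [Fintype α] [DecidableEq α] [AddCommMonoid M] [Module ℚ≥0 M]

theorem expect_apply (h : α → M) (i : α) : 𝔼 σ : Perm α, h (σ i) = 𝔼 k, h k := by
  have : Nonempty α := ⟨i⟩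
  have hinv (k : α) : 𝔼 σ : Perm α, h (σ k) = 𝔼 σ : Perm α, h (σ i) :=
    Fintype.expect_equiv (Equiv.mulRight (swap i k)) _ _ fun σ => by simp
  calc 𝔼 σ : Perm α, h (σ i) = 𝔼 k, 𝔼 σ : Perm α, h (σ k) := by
        simp only [hinv, Fintype.expect_const]
    _ = 𝔼 σ : Perm α, 𝔼 k, h (σ k) := expect_comm ..
    _ = 𝔼 σ : Perm α, 𝔼 k, h k := by
        congr! 1 with σ
        exact Fintype.expect_equiv σ _ _ fun _ => rfl
    _ = 𝔼 k, h k := Fintype.expect_const _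

theorem expect_apply_apply_of_ne (h : α → α → M) {i j : α} (hij : i ≠ j) :
    𝔼 σ : Perm α, h (σ i) (σ j) = 𝔼 p ∈ univ.offDiag, h p.1 p.2 := by
  have hne : (univ.offDiag : Finset (α × α)).Nonempty := ⟨(i, j), by simpa using hij⟩
  have hinv : ∀ p ∈ (univ.offDiag : Finset (α × α)),
      𝔼 σ : Perm α, h (σ p.1) (σ p.2) = 𝔼 σ : Perm α, h (σ i) (σ j) := by
    intro p hp
    obtain ⟨τ, hτi, hτj⟩ := MulAction.is_two_pretransitive_iff.mp
      (isMultiplyPretransitive α 2) hij (mem_offDiag.mp hp).2.2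
    exact Fintype.expect_equiv (Equiv.mulRight τ) _ _ fun σ => by
      simp [← hτi, ← hτj]
  calc 𝔼 σ : Perm α, h (σ i) (σ j)
        = 𝔼 p ∈ univ.offDiag, 𝔼 σ : Perm α, h (σ p.1) (σ p.2) := by
          rw [expect_congr rfl hinv, expect_const hne]
    _ = 𝔼 σ : Perm α, 𝔼 p ∈ univ.offDiag, h (σ p.1) (σ p.2) := expect_comm ..
    _ = 𝔼 σ : Perm α, 𝔼 p ∈ univ.offDiag, h p.1 p.2 := by
        congr! 1 with σ
        exact expect_equiv (σ.prodCongr σ) (by simp [σ.injective.ne_iff]) fun _ _ => rfl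
    _ = 𝔼 p ∈ univ.offDiag, h p.1 p.2 := Fintype.expect_const _

end Equiv.Perm

theorem Finset.sum_offDiag_mul {ι R : Type*} [DecidableEq ι] [CommRing R] (s : Finset ι)
    (f g : ι → R) :
    ∑ p ∈ s.offDiag, f p.1 * g p.2 = (∑ i ∈ s, f i) * (∑ i ∈ s, g i) - ∑ i ∈ s, f i * g i := by
  rw [sum_mul_sum, ← sum_product', ← diag_union_offDiag, sum_union (disjoint_diag_offDiag _),
    sum_diag]
  ring

theorem Monovary.expect_offDiag_mul_le_expect_mul_expect {ι 𝕜 : Type*} [Fintype ι] [DecidableEq ι]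
    [Nontrivial ι] [Field 𝕜] [LinearOrder 𝕜] [IsStrictOrderedRing 𝕜] {f g : ι → 𝕜}
    (hfg : Monovary f g) :
    𝔼 p ∈ univ.offDiag, f p.1 * g p.2 ≤ (𝔼 i, f i) * 𝔼 i, g i := by
  have hcheb := hfg.sum_mul_sum_le_card_mul_sum
  have hn : (1 : 𝕜) < Fintype.card ι := by exact_mod_cast Fintype.one_lt_card
  rw [expect_eq_sum_div_card, sum_offDiag_mul, offDiag_card, Fintype.expect_eq_sum_div_card,
    Fintype.expect_eq_sum_div_card, card_univ, Nat.cast_sub (Nat.le_mul_self _), Nat.cast_mul]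
  set n : 𝕜 := (Fintype.card ι : 𝕜)
  rw [div_mul_div_comm, div_le_div_iff₀ (by nlinarith) (by positivity)]
  nlinarith

/-- The entries of a uniformly random permutation of distinct reals
`a 0 < a 1 < ... < a (n-1)` are pairwise negatively associated: for distinct
positions `i ≠ j` and monotone non-decreasing `f, g : ℝ → ℝ`,
`E[f(X_i)·g(X_j)] ≤ E[f(X_i)]·E[g(X_j)]`, where `X_i = a (σ i)` for a
uniformly random permutation `σ`. -/
theorem perm_pairwise_neg_assoc {n : ℕ} (a : Fin n → ℝ) (ha : StrictMono a)
    (i j : Fin n) (hij : i ≠ j) (f g : ℝ → ℝ)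
    (hf : Monotone f) (hg : Monotone g) :
    (∑ σ : Equiv.Perm (Fin n),
        (1 / (Nat.factorial n : ℝ)) * (f (a (σ i)) * g (a (σ j)))) ≤
      (∑ σ : Equiv.Perm (Fin n),
          (1 / (Nat.factorial n : ℝ)) * f (a (σ i))) *
        (∑ σ : Equiv.Perm (Fin n),
            (1 / (Nat.factorial n : ℝ)) * g (a (σ j))) := by
  have : Nontrivial (Fin n) := ⟨⟨i, j, hij⟩⟩
  have hexpect (X : Perm (Fin n) → ℝ) : ∑ σ, 1 / (n.factorial : ℝ) * X σ = 𝔼 σ, X σ := by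
    rw [Fintype.expect_eq_sum_div_card, Fintype.card_perm, Fintype.card_fin, ← mul_sum,
      one_div_mul_eq_div]
  simp only [hexpect]
  rw [Perm.expect_apply_apply_of_ne (fun k l => f (a k) * g (a l)) hij,
    Perm.expect_apply (fun k => f (a k)), Perm.expect_apply (fun k => g (a k))]
  exact ((hf.comp ha.monotone).monovary (hg.comp ha.monotone))
    |>.expect_offDiag_mul_le_expect_mul_expect
end
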